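/- Let H = (f, φ; g, ψ) with entries in L²(𝕋) and suppose R_H is bounded on L²(𝕋). Then R_H is self-adjoint if and only if f and ψ are real-valued (almost everywhere) and g − φ̄ ∈ H². -/

import Mathlib

open MeasureTheory AddCircle Filter Topology
open scoped ENNReal

noncomputable section

namespace GSIO

instance : Fact (0 < 2 * Real.pi) := ⟨by positivity⟩

/-- The unit circle, realized as `ℝ / 2πℤ`. -/
abbrev 𝕋 : Type := AddCircle (2 * Real.pi)

/-- Normalized Lebesgue (Haar) measure on the circle. -/
abbrev μ : Measure 𝕋 := @haarAddCircle (2 * Real.pi) _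

/-- `L²(𝕋)`. -/
abbrev L2 : Type := Lp ℂ 2 μ

/-- The embedding `𝕋 ⊆ ℂ`, `t ↦ e^{it}`. -/
def e : C(𝕋, ℂ) := ⟨fun t => (toCircle t : ℂ), continuous_induced_dom.comp continuous_toCircle⟩

/-- The Hardy space `H²`: the closed linear span of `{zⁿ : n ≥ 0}` in `L²`. -/
def H2 : Submodule ℂ L2 :=
  (Submodule.span ℂ (Set.range fun n : ℕ => (fourierLp 2 (n : ℤ) : L2))).topologicalClosure

instance : CompleteSpace H2 :=
  IsClosed.completeSpace_coe (hs := Submodule.isClosed_topologicalClosure _)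

/-- The Riesz projection `P₊ : L² → H² ⊆ L²`. -/
def Pplus : L2 →L[ℂ] L2 := (H2.subtypeL).comp (H2.orthogonalProjectionOnto)

/-- `P₋ = I - P₊`. -/
def Pminus : L2 →L[ℂ] L2 := ContinuousLinearMap.id ℂ L2 - Pplus

/-- The GSIO defining relation `R x = P₊(f·P₊x) + P₋(g·P₊x) + P₊(φ·P₋x) + P₋(ψ·P₋x)`
at a point `x ∈ L²` (including the requirement that the four products lie in `L²`). -/
def gsioEq (R : L2 → L2) (f g φ ψ : 𝕋 → ℂ) (x : L2) : Prop :=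
  ∃ (h₁ : MemLp (f * ⇑(Pplus x)) 2 μ) (h₂ : MemLp (g * ⇑(Pplus x)) 2 μ)
    (h₃ : MemLp (φ * ⇑(Pminus x)) 2 μ) (h₄ : MemLp (ψ * ⇑(Pminus x)) 2 μ),
    R x = Pplus (h₁.toLp _) + Pminus (h₂.toLp _) + Pplus (h₃.toLp _) + Pminus (h₄.toLp _)

/-- `R` is the (bounded) generalized singular integral operator with
symbol matrix `(f, φ; g, ψ)`. -/
def IsGSIO (R : L2 →L[ℂ] L2) (f g φ ψ : 𝕋 → ℂ) : Prop := ∀ x : L2, gsioEq (⇑R) f g φ ψ x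

/-- Normalized reproducing kernel `k_z` of `H²`, as an element of `L²`. -/
def kern (z : ℂ) : L2 :=
  (Real.sqrt (1 - ‖z‖ ^ 2) : ℂ) • ∑' n : ℕ, (starRingEnd ℂ z) ^ n • (fourierLp 2 (n : ℤ) : L2)

/-- The unit vector `z̄k̄_z : w ↦ w̄ ⬝ conj (k_z w)` of `(H²)^⊥`, as an element of `L²`. -/
def kbar (z : ℂ) : L2 :=
  (Real.sqrt (1 - ‖z‖ ^ 2) : ℂ) • ∑' n : ℕ, z ^ n • (fourierLp 2 (-(n + 1) : ℤ) : L2)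

/-- `L∞(𝕋)`: essentially bounded (a.e. strongly measurable) functions. -/
def Linf : Set (𝕋 → ℂ) := {h | MemLp h ∞ μ}

/-- `C(𝕋)`: functions (a.e. equal to) continuous functions. -/
def CT : Set (𝕋 → ℂ) := {h | ∃ c : 𝕋 → ℂ, Continuous c ∧ h =ᵐ[μ] c}

/-- `H∞ = H² ∩ L∞`. -/
def Hinf : Set (𝕋 → ℂ) := {h | ∃ h2 : MemLp h 2 μ, h2.toLp h ∈ H2 ∧ MemLp h ∞ μ}

/-- `H∞ + C(𝕋)`. -/
def HinfC : Set (𝕋 → ℂ) := {h | ∃ a ∈ Hinf, ∃ c ∈ CT, h =ᵐ[μ] a + c}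

/-- The quasicontinuous functions `QC = (H∞ + C) ∩ conj (H∞ + C)`. -/
def QC : Set (𝕋 → ℂ) := {h | h ∈ HinfC ∧ star h ∈ HinfC}

/-- The set of GSIOs with all four symbols in `S`. -/
def gsioSet (S : Set (𝕋 → ℂ)) : Set (L2 →L[ℂ] L2) :=
  {R | ∃ f g φ ψ : 𝕋 → ℂ, f ∈ S ∧ g ∈ S ∧ φ ∈ S ∧ ψ ∈ S ∧ IsGSIO R f g φ ψ}

/-- The C*-algebra `𝔑_S` generated by the GSIOs with symbols in `S`. -/
def NAlg (S : Set (𝕋 → ℂ)) : StarSubalgebra ℂ (L2 →L[ℂ] L2) :=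
  (StarAlgebra.adjoin ℂ (gsioSet S)).topologicalClosure

/-- Generators `R_{H₁} R_{H₂} - R_K` of the semicommutator ideal. -/
def semiGen (S : Set (𝕋 → ℂ)) : Set (L2 →L[ℂ] L2) :=
  {T | ∃ f₁ g₁ φ₁ ψ₁ f₂ g₂ φ₂ ψ₂ g φ : 𝕋 → ℂ,
      f₁ ∈ S ∧ g₁ ∈ S ∧ φ₁ ∈ S ∧ ψ₁ ∈ S ∧ f₂ ∈ S ∧ g₂ ∈ S ∧ φ₂ ∈ S ∧ ψ₂ ∈ S ∧
      g ∈ S ∧ φ ∈ S ∧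
      ∃ R₁ R₂ RK : L2 →L[ℂ] L2, IsGSIO R₁ f₁ g₁ φ₁ ψ₁ ∧ IsGSIO R₂ f₂ g₂ φ₂ ψ₂ ∧
        IsGSIO RK (f₁ * f₂) g φ (ψ₁ * ψ₂) ∧ T = R₁ * R₂ - RK}

/-- The closed two-sided ideal `𝔖𝔑_S` of `𝔑_S` generated by the semicommutators. -/
def SemiIdeal (S : Set (𝕋 → ℂ)) : Set (L2 →L[ℂ] L2) :=
  closure (AddSubgroup.closure
    {T | ∃ a b t : L2 →L[ℂ] L2, a ∈ NAlg S ∧ b ∈ NAlg S ∧ t ∈ semiGen S ∧ T = a * t * b} :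
      Set (L2 →L[ℂ] L2))

/-- Fredholm: closed range and finite-dimensional kernel and cokernel. -/
def IsFredholm (T : L2 →L[ℂ] L2) : Prop :=
  FiniteDimensional ℂ (LinearMap.ker (T : L2 →ₗ[ℂ] L2)) ∧
  FiniteDimensional ℂ (L2 ⧸ LinearMap.range (T : L2 →ₗ[ℂ] L2)) ∧
  IsClosed (LinearMap.range (T : L2 →ₗ[ℂ] L2) : Set L2)

/-- Fredholm index `ind T = dim ker T - dim ker T*`. -/
def ind (T : L2 →L[ℂ] L2) : ℤ :=
  (Module.finrank ℂ (LinearMap.ker (T : L2 →ₗ[ℂ] L2)) : ℤ) -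
    (Module.finrank ℂ (LinearMap.ker (ContinuousLinearMap.adjoint T : L2 →ₗ[ℂ] L2)) : ℤ)

/-- Essential spectrum (spectrum in the Calkin algebra, via Atkinson's theorem). -/
def essSpectrum (T : L2 →L[ℂ] L2) : Set ℂ := {z | ¬ IsFredholm (T - z • 1)}

/-- Essential norm: distance to the compact operators. -/
def essNorm (T : L2 →L[ℂ] L2) : ℝ :=
  sInf ((fun K => ‖T + K‖) '' {K : L2 →L[ℂ] L2 | IsCompactOperator K})

/-- Essential range of a measurable function. -/
def essRange (f : 𝕋 → ℂ) : Set ℂ := {c | ∀ ε > 0, μ {t | dist (f t) c < ε} ≠ 0}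

/-- `a` has winding number `w` about the origin, via a continuous argument lift. -/
def HasWindingNumber (a : C(𝕋, ℂ)) (w : ℤ) : Prop :=
  ∃ θ : ℝ → ℝ, ContinuousOn θ (Set.Icc 0 (2 * Real.pi)) ∧
    (∀ t ∈ Set.Icc 0 (2 * Real.pi),
      a (t : 𝕋) = (‖a (t : 𝕋)‖ : ℂ) * Complex.exp (θ t * Complex.I)) ∧
    θ (2 * Real.pi) - θ 0 = 2 * Real.pi * w

/-- The constant function `1` in `L²`. -/
def one2 : L2 := MemLp.toLp (fun _ => (1 : ℂ)) (memLp_const 1)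

/-- The rank-one operator `1 ⊗ 1 : x ↦ ⟨x,1⟩·1`. -/
def oneProj : L2 →L[ℂ] L2 := (innerSL ℂ one2).smulRight one2

/-- The Hilbert transform `ℍ = P₊ - P₋ - 1⊗1`. -/
def hilbertT : L2 →L[ℂ] L2 := Pplus - Pminus - oneProj

/-- `BMO(𝕋) = L∞ + ℍ L∞`, as a subset of `L²`. -/
def BMO2 : Set L2 := {x | ∃ a b : L2, ⇑a ∈ Linf ∧ ⇑b ∈ Linf ∧ x = a + hilbertT b}

/-- `⋂_{p ≥ 1} L^p(𝕋)`. -/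
def Lfin : Set (𝕋 → ℂ) := {h | ∀ p : ℝ, 1 ≤ p → MemLp h (ENNReal.ofReal p) μ}

/-- The GSIO relation for a map defined on functions (rather than on `L²`). -/
def gsioEqF (R : (𝕋 → ℂ) → (𝕋 → ℂ)) (f g φ ψ : 𝕋 → ℂ) (x : 𝕋 → ℂ) : Prop :=
  ∃ (hx : MemLp x 2 μ)
    (h₁ : MemLp (f * ⇑(Pplus (hx.toLp x))) 2 μ) (h₂ : MemLp (g * ⇑(Pplus (hx.toLp x))) 2 μ)
    (h₃ : MemLp (φ * ⇑(Pminus (hx.toLp x))) 2 μ) (h₄ : MemLp (ψ * ⇑(Pminus (hx.toLp x))) 2 μ),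
    R x =ᵐ[μ] ⇑(Pplus (h₁.toLp _) + Pminus (h₂.toLp _) + Pplus (h₃.toLp _) + Pminus (h₄.toLp _))

/-- Distance in `L∞` from a function to `H∞`. -/
def distHinfF (a : 𝕋 → ℂ) : ℝ :=
  sInf {r : ℝ | ∃ h ∈ Hinf, r = (eLpNorm (a - h) ∞ μ).toReal}

end GSIO

namespace GSIO

/-- The radial-limit function of `T` along the reproducing kernels `k_{rξ}` is `f`:
`lim_{r→1⁻} ⟨T k_{rξ}, k_{rξ}⟩ = f ξ` for a.e. `ξ` (inner products in the Mathlib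
convention, conjugate-linear in the first variable). -/
def symbPlus (T : L2 → L2) (f : 𝕋 → ℂ) : Prop :=
  ∀ᵐ ξ ∂μ, Tendsto
    (fun r : ℝ => (inner ℂ (kern ((r : ℂ) * e ξ)) (T (kern ((r : ℂ) * e ξ))) : ℂ))
    (𝓝[<] (1 : ℝ)) (𝓝 (f ξ))

/-- The radial-limit function of `T` along the vectors `z̄k̄_{rξ}` is `ψ`:
`lim_{r→1⁻} ⟨T z̄k̄_{rξ}, z̄k̄_{rξ}⟩ = ψ ξ` for a.e. `ξ`. -/
def symbMinus (T : L2 → L2) (ψ : 𝕋 → ℂ) : Prop :=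
  ∀ᵐ ξ ∂μ, Tendsto
    (fun r : ℝ => (inner ℂ (kbar ((r : ℂ) * e ξ)) (T (kbar ((r : ℂ) * e ξ))) : ℂ))
    (𝓝[<] (1 : ℝ)) (𝓝 (ψ ξ))

/-- `ρ(T) = (f, ψ)`: the pair of radial-limit symbol functions of `T`, in `L∞ ⊕ L∞`. -/
def HasSymbol (T : L2 →L[ℂ] L2) (f ψ : 𝕋 → ℂ) : Prop :=
  f ∈ Linf ∧ ψ ∈ Linf ∧ symbPlus (⇑T) f ∧ symbMinus (⇑T) ψ

end GSIO


/-!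
In the Fourier basis `e_n = zⁿ`, the entry `⟪e_n, R_H e_m⟫` is the `(n - m)`-th Fourier
coefficient of `f`, `g`, `φ` or `ψ`, according to the signs of `n` and `m`. Hence `R_H` is
self-adjoint iff this matrix is Hermitian. On the two diagonal blocks this says
`f̂(k) = conj f̂(-k)` and `ψ̂(k) = conj ψ̂(-k)`, i.e. `f` and `ψ` are real; on the off-diagonal
blocks it says `ĝ(k) = conj φ̂(-k)` for `k < 0`, i.e. the negative Fourier coefficients of
`g - φ̄` vanish.
-/

open scoped InnerProductSpace

section HilbertBasis

variable {ι 𝕜 E : Type*} [RCLike 𝕜] [NormedAddCommGroup E] [InnerProductSpace 𝕜 E]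

theorem HilbertBasis.ext_inner (b : HilbertBasis ι 𝕜 E) {x y : E}
    (h : ∀ i, ⟪b i, x⟫_𝕜 = ⟪b i, y⟫_𝕜) : x = y :=
  b.repr.injective <| lp.ext <| funext fun i => by
    simp only [b.repr_apply_apply, h]

theorem HilbertBasis.isSelfAdjoint_iff_isHermitian [CompleteSpace E] (b : HilbertBasis ι 𝕜 E)
    (T : E →L[𝕜] E) :
    IsSelfAdjoint T ↔ (Matrix.of fun i j => ⟪b i, T (b j)⟫_𝕜).IsHermitian := by
  simp only [Matrix.IsHermitian.ext_iff, Matrix.of_apply, ← starRingEnd_apply, inner_conj_symm]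
  refine ⟨fun hT i j => ContinuousLinearMap.isSelfAdjoint_iff_isSymmetric.mp hT _ _,
    fun h => ContinuousLinearMap.isSelfAdjoint_iff'.mpr ?_⟩
  refine ContinuousLinearMap.ext_on
    (Submodule.dense_iff_topologicalClosure_eq_top.mpr b.dense_span) ?_
  rintro _ ⟨j, rfl⟩
  exact b.ext_inner fun i => by rw [ContinuousLinearMap.adjoint_inner_right, h]

end HilbertBasis

section FourierCoeff

variable {T : ℝ} [Fact (0 < T)]

theorem fourierCoeff_star (w : AddCircle T → ℂ) (n : ℤ) :
    fourierCoeff (star w) n = star (fourierCoeff w (-n)) := by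
  rw [fourierCoeff, fourierCoeff, neg_neg, Complex.star_def, ← integral_conj]
  refine integral_congr_ae (Eventually.of_forall fun t => ?_)
  simp

theorem fourierCoeff_mul_fourierLp (w : AddCircle T → ℂ) (m n : ℤ) :
    fourierCoeff (w * ⇑(fourierLp 2 m : Lp ℂ 2 (haarAddCircle (T := T)))) n =
      fourierCoeff w (n - m) := by
  rw [fourierCoeff_congr_ae ((EventuallyEq.refl _ w).mul (coeFn_fourierLp 2 m))]
  refine integral_congr_ae (Eventually.of_forall fun t => ?_)
  simp only [Pi.mul_apply, smul_eq_mul, sub_eq_add_neg, neg_add, neg_neg, fourier_add]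
  ring

theorem inner_fourierLp_toLp {w : AddCircle T → ℂ} (hw : MemLp w 2 haarAddCircle) (n : ℤ) :
    ⟪fourierLp 2 n, hw.toLp w⟫_ℂ = fourierCoeff w n := by
  rw [← coe_fourierBasis, ← HilbertBasis.repr_apply_apply, fourierBasis_repr,
    fourierCoeff_congr_ae hw.coeFn_toLp]

theorem ae_eq_iff_fourierCoeff_eq {w v : AddCircle T → ℂ} (hw : MemLp w 2 haarAddCircle)
    (hv : MemLp v 2 haarAddCircle) : w =ᵐ[haarAddCircle] v ↔ fourierCoeff w = fourierCoeff v := by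
  refine ⟨fourierCoeff_congr_ae, fun h => ?_⟩
  rw [← MemLp.toLp_eq_toLp_iff hw hv]
  exact fourierBasis.ext_inner fun n => by simp only [coe_fourierBasis, inner_fourierLp_toLp, h]

theorem ae_im_eq_zero_iff_fourierCoeff {w : AddCircle T → ℂ} (hw : MemLp w 2 haarAddCircle) :
    (∀ᵐ t ∂haarAddCircle, (w t).im = 0) ↔
      ∀ k, fourierCoeff w k = star (fourierCoeff w (-k)) := by
  have : (∀ᵐ t ∂haarAddCircle, (w t).im = 0) ↔ star w =ᵐ[haarAddCircle] w := by
    simp only [EventuallyEq, Pi.star_apply, Complex.star_def, Complex.conj_eq_iff_im]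
  rw [this, ae_eq_iff_fourierCoeff_eq hw.star hw, funext_iff]
  simp only [fourierCoeff_star, eq_comm]

end FourierCoeff

/-- When `a, b, c, d` are the Fourier coefficients of `f, g, φ, ψ`, this is the matrix
`(⟪e_n, R_H e_m⟫)_{n,m ∈ ℤ}` of the GSIO with symbol `H = (f, φ; g, ψ)`: each of the four blocks
cut out by the signs of `n` and `m` is a Toeplitz matrix. -/
def gsioMatrix (a b c d : ℤ → ℂ) : Matrix ℤ ℤ ℂ :=
  Matrix.of fun n m => (if 0 ≤ n then (if 0 ≤ m then a else c) else (if 0 ≤ m then b else d)) (n - m)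

theorem gsioMatrix_isHermitian_iff (a b c d : ℤ → ℂ) :
    (gsioMatrix a b c d).IsHermitian ↔
      (∀ k, a k = star (a (-k))) ∧ (∀ k, d k = star (d (-k))) ∧ ∀ k < 0, b k = star (c (-k)) := by
  simp only [Matrix.IsHermitian.ext_iff, gsioMatrix, Matrix.of_apply]
  constructor
  · intro h
    refine ⟨fun k => ?_, fun k => ?_, fun k hk => ?_⟩
    · simpa using (h (max k 0) (max k 0 - k)).symm
    · simpa [show min k 0 - 1 < 0 by omega, show min k 0 - 1 - k < 0 by omega] using
        (h (min k 0 - 1) (min k 0 - 1 - k)).symm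
    · simpa [hk.not_ge] using (h k 0).symm
  · rintro ⟨ha, hd, hbc⟩ n m
    split_ifs
    · rw [ha (n - m), neg_sub]
    · rw [hbc (n - m) (by omega), neg_sub]
    · rw [hbc (m - n) (by omega), neg_sub, star_star]
    · rw [hd (n - m), neg_sub]

namespace GSIO

theorem Pplus_eq_starProjection : Pplus = H2.starProjection := rfl

theorem Pminus_eq_starProjection : Pminus = H2ᗮ.starProjection :=
  H2.starProjection_orthogonal.symm

theorem fourierLp_mem_H2 {k : ℤ} (hk : 0 ≤ k) : (fourierLp 2 k : L2) ∈ H2 :=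
  Submodule.le_topologicalClosure _ <| Submodule.subset_span ⟨k.toNat, by simp [hk]⟩

theorem fourierLp_mem_orthogonal_H2 {k : ℤ} (hk : k < 0) : (fourierLp 2 k : L2) ∈ H2ᗮ := by
  rw [H2, Submodule.orthogonal_closure, ← Submodule.span_singleton_le_iff_mem,
    ← Submodule.isOrtho_iff_le, Submodule.isOrtho_span]
  rintro _ rfl _ ⟨n, rfl⟩
  exact orthonormal_fourier.inner_eq_zero (by omega)

theorem Pplus_fourierLp (k : ℤ) :
    Pplus (fourierLp 2 k) = if 0 ≤ k then (fourierLp 2 k : L2) else 0 := by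
  split_ifs with hk
  · exact Submodule.starProjection_eq_self_iff.mpr (fourierLp_mem_H2 hk)
  · exact (H2.starProjection_apply_eq_zero_iff).mpr (fourierLp_mem_orthogonal_H2 (by omega))

theorem Pminus_fourierLp (k : ℤ) :
    Pminus (fourierLp 2 k) = if 0 ≤ k then 0 else (fourierLp 2 k : L2) := by
  rw [Pminus, sub_apply, Pplus_fourierLp]
  split_ifs <;> simp

theorem inner_fourierLp_Pplus (k : ℤ) (x : L2) :
    ⟪(fourierLp 2 k : L2), Pplus x⟫_ℂ = if 0 ≤ k then ⟪(fourierLp 2 k : L2), x⟫_ℂ else 0 := by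
  rw [Pplus_eq_starProjection, ← H2.inner_starProjection_left_eq_right, ← Pplus_eq_starProjection,
    Pplus_fourierLp]
  split_ifs <;> simp

theorem inner_fourierLp_Pminus (k : ℤ) (x : L2) :
    ⟪(fourierLp 2 k : L2), Pminus x⟫_ℂ = if 0 ≤ k then 0 else ⟪(fourierLp 2 k : L2), x⟫_ℂ := by
  rw [Pminus, sub_apply, inner_sub_right, inner_fourierLp_Pplus]
  split_ifs <;> simp

theorem mem_H2_iff {x : L2} : x ∈ H2 ↔ ∀ k < 0, ⟪(fourierLp 2 k : L2), x⟫_ℂ = 0 := by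
  refine ⟨fun hx k hk => ?_, fun h => ?_⟩
  · rw [← H2.starProjection_eq_self_iff.mpr hx, ← Pplus_eq_starProjection, inner_fourierLp_Pplus,
      if_neg hk.not_ge]
  · rw [← H2.orthogonal_orthogonal, ← H2ᗮ.starProjection_apply_eq_zero_iff,
      ← Pminus_eq_starProjection]
    refine fourierBasis.ext_inner fun k => ?_
    rw [coe_fourierBasis, inner_fourierLp_Pminus, inner_zero_right]
    split_ifs with hk
    · rfl
    · exact h k (by omega)

theorem IsGSIO.fourierMatrix_eq {f g φ ψ : 𝕋 → ℂ} {R : L2 →L[ℂ] L2} (hR : IsGSIO R f g φ ψ) :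
    (Matrix.of fun n m => ⟪fourierBasis n, R (fourierBasis m)⟫_ℂ) =
      gsioMatrix (fourierCoeff f) (fourierCoeff g) (fourierCoeff φ) (fourierCoeff ψ) := by
  ext n m
  obtain ⟨h₁, h₂, h₃, h₄, hRm⟩ := hR (fourierLp 2 m)
  simp only [Matrix.of_apply, coe_fourierBasis, hRm, inner_add_right, inner_fourierLp_Pplus,
    inner_fourierLp_Pminus, inner_fourierLp_toLp]
  have mul_zero_coeff (u : 𝕋 → ℂ) : fourierCoeff (u * ⇑(0 : L2)) n = 0 := by
    rw [fourierCoeff_congr_ae ((EventuallyEq.refl _ u).mul (Lp.coeFn_zero ℂ 2 μ))]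
    simp [fourierCoeff]
  rw [Pplus_fourierLp, Pminus_fourierLp]
  simp only [gsioMatrix, Matrix.of_apply]
  split_ifs <;> simp only [fourierCoeff_mul_fourierLp, mul_zero_coeff, add_zero, zero_add]

theorem sub_star_mem_H2_iff {g φ : 𝕋 → ℂ} (hg : MemLp g 2 μ) (hφ : MemLp φ 2 μ) :
    (∃ hc : MemLp (g - star φ) 2 μ, hc.toLp (g - star φ) ∈ H2) ↔
      ∀ k < 0, fourierCoeff g k = star (fourierCoeff φ (-k)) := by
  suffices (hg.sub hφ.star).toLp (g - star φ) ∈ H2 ↔ _ from ⟨fun ⟨_, h⟩ => this.mp h,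
    fun h => ⟨_, this.mpr h⟩⟩
  rw [MemLp.toLp_sub hg hφ.star, mem_H2_iff]
  simp only [inner_sub_right, inner_fourierLp_toLp, fourierCoeff_star, sub_eq_zero]

/-- If `R_H` is bounded with symbols in `L²(𝕋)`, then `R_H` is
self-adjoint iff `f` and `ψ` are a.e. real valued and `g - φ̄ ∈ H²`. -/
theorem gsio_selfAdjoint_iff (f g φ ψ : 𝕋 → ℂ)
    (hf : MemLp f 2 μ) (hg : MemLp g 2 μ) (hφ : MemLp φ 2 μ) (hψ : MemLp ψ 2 μ)
    (R : L2 →L[ℂ] L2) (hR : IsGSIO R f g φ ψ) :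
    IsSelfAdjoint R ↔
      ((∀ᵐ t ∂μ, (f t).im = 0) ∧ (∀ᵐ t ∂μ, (ψ t).im = 0) ∧
        ∃ hc : MemLp (g - star φ) 2 μ, hc.toLp (g - star φ) ∈ H2) := by
  rw [fourierBasis.isSelfAdjoint_iff_isHermitian, hR.fourierMatrix_eq, gsioMatrix_isHermitian_iff,
    ae_im_eq_zero_iff_fourierCoeff hf, ae_im_eq_zero_iff_fourierCoeff hψ, sub_star_mem_H2_iff hg hφ]

end GSIO
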